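/- arXiv:2309.06198 — 2 statements merged into one kernel-verified Lean document; each statement's English description precedes it below -/
import Mathlib

section
/- With Q = ℤv₁ ⊕ ℤv₂, ε the standard bimultiplicative 2-cocycle, σ the swap automorphism, and η any admissible sign function, one has for all integers m,n: η(mv₁+nv₂)·η(mv₂+nv₁) = (−1)^{m²−n²}. -/
/-!
Pairing `α = mv₁ + nv₂` with `σ α = nv₁ + mv₂`, the sum `α + σ α` is `σ`-fixed, so `η` is `1`
there and the admissibility relation at `(α, σ α)` expresses `η α · η (σ α)` through `ε` alone:
it is `ε(σ α, α) / ε(α, σ α) = (-1)^(2mn + m²) / (-1)^(2mn + n²)`.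
-/

/-- The standard bimultiplicative 2-cocycle on `Q = ℤv₁ ⊕ ℤv₂` (realized as `ℤ × ℤ`),
determined by `ε(v₁,v₁) = ε(v₂,v₂) = ε(v₂,v₁) = −1` and `ε(v₁,v₂) = 1`. -/
def epsStd (α β : ℤ × ℤ) : ℤˣ :=
  (-1) ^ (α.1 * β.1 + α.2 * β.2 + α.2 * β.1)

/-- The swap automorphism `σ(v₁) = v₂`, `σ(v₂) = v₁` of `Q = ℤ × ℤ`. -/
def swapAut (α : ℤ × ℤ) : ℤ × ℤ := (α.2, α.1)

theorem mul_apply_involution_of_admissible {Q G : Type*} [AddCommGroup Q] [CommGroup G]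
    (η : Q → G) (ε : Q → Q → G) (σ : Q → Q)
    (hσ_add : ∀ α β, σ (α + β) = σ α + σ β) (hσ_invol : ∀ α, σ (σ α) = α)
    (hη : ∀ α β, η α * η β * ε α β = η (α + β) * ε (σ α) (σ β))
    (hfix : ∀ α, σ α = α → η α = 1) (α : Q) :
    η α * η (σ α) = ε (σ α) α / ε α (σ α) := by
  have hsum_fixed : σ (α + σ α) = α + σ α := by rw [hσ_add, hσ_invol, add_comm]
  have h := hη α (σ α)
  rw [hσ_invol, hfix _ hsum_fixed, one_mul] at h
  exact eq_div_of_mul_eq' h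

theorem swapAut_add (α β : ℤ × ℤ) : swapAut (α + β) = swapAut α + swapAut β := rfl

theorem swapAut_swapAut (α : ℤ × ℤ) : swapAut (swapAut α) = α := rfl

theorem epsStd_swap_div (m n : ℤ) :
    epsStd (n, m) (m, n) / epsStd (m, n) (n, m) = (-1) ^ (m ^ 2 - n ^ 2) := by
  simp only [epsStd]
  rw [div_eq_mul_inv, ← zpow_sub]
  ring_nf

/-- For any admissible sign function `η` (i.e. `η : Q → {±1}` with
`η(α)η(β)ε(α,β) = η(α+β)ε(σ(α),σ(β))` and `η(α) = 1` whenever `σ(α) = α`), one has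
`η(mv₁+nv₂)·η(mv₂+nv₁) = (−1)^(m²−n²)` for all integers `m, n`. -/
theorem stmt1 (η : ℤ × ℤ → ℤˣ)
    (hη : ∀ α β : ℤ × ℤ, η α * η β * epsStd α β = η (α + β) * epsStd (swapAut α) (swapAut β))
    (hfix : ∀ α : ℤ × ℤ, swapAut α = α → η α = 1) :
    ∀ m n : ℤ, η (m, n) * η (n, m) = (-1) ^ (m ^ 2 - n ^ 2) := fun m n =>
  (mul_apply_involution_of_admissible η epsStd swapAut swapAut_add swapAut_swapAut hη hfix
    (m, n)).trans (epsStd_swap_div m n)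
end

section
/- With Q = ℤv₁ ⊕ ℤv₂, ε the standard bimultiplicative 2-cocycle, σ the swap automorphism, and η any admissible sign function, let σ̂ be the ℂ-linear automorphism of the group algebra ℂ[Q] determined on the canonical basis by σ̂(e^α) = η(α)⁻¹ e^{σ(α)}. Then σ̂ has order exactly 4: σ̂⁴ = id but σ̂² ≠ id (indeed σ̂²(e^α) = (−1)^{m²−n²} e^α for α = mv₁+nv₂). -/
open AddMonoidAlgebra

theorem swapAut_involutive : Function.Involutive swapAut := fun _ => rfl

theorem swapAut_add_swapAut_self (α : ℤ × ℤ) : swapAut (α + swapAut α) = α + swapAut α :=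
  Prod.ext (add_comm _ _) (add_comm _ _)

theorem epsStd_swapAut_self_div (α : ℤ × ℤ) :
    epsStd (swapAut α) α / epsStd α (swapAut α) = (-1) ^ (α.1 ^ 2 - α.2 ^ 2) := by
  rw [epsStd, epsStd, div_eq_mul_inv, ← zpow_sub]
  congr 1
  simp only [swapAut]
  ring

theorem mul_apply_swapAut_of_admissible {η : ℤ × ℤ → ℤˣ}
    (hη : ∀ α β : ℤ × ℤ, η α * η β * epsStd α β = η (α + β) * epsStd (swapAut α) (swapAut β))
    (hfix : ∀ α : ℤ × ℤ, swapAut α = α → η α = 1) (α : ℤ × ℤ) :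
    η α * η (swapAut α) = (-1) ^ (α.1 ^ 2 - α.2 ^ 2) := by
  have h := hη α (swapAut α)
  rw [hfix _ (swapAut_add_swapAut_self α), one_mul, swapAut_involutive α] at h
  rw [← epsStd_swapAut_self_div, eq_div_iff_mul_eq', h]

theorem Int.cast_units_mul_self {R : Type*} [Ring R] (u : ℤˣ) : ((u : ℤ) : R) * (u : ℤ) = 1 := by
  rw [← Int.cast_mul, ← Units.val_mul, Int.units_mul_self, Units.val_one, Int.cast_one]

section SignedPermutation

variable {k G : Type*} [Semiring k]

theorem sq_apply_single_of_involutive {σ : G → G} (hσ : Function.Involutive σ) {c : G → k}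
    {T : Module.End k k[G]} (hT : ∀ α, T (single α 1) = c α • single (σ α) 1) (α : G) :
    (T ^ 2) (single α 1) = (c α * c (σ α)) • single α 1 := by
  rw [sq, Module.End.mul_apply, hT, map_smul, hT, hσ, smul_smul]

theorem sq_eq_one_of_apply_single_eq_smul {u : G → k} (hu : ∀ α, u α * u α = 1)
    {S : Module.End k k[G]} (hS : ∀ α, S (single α 1) = u α • single α 1) :
    S ^ 2 = 1 :=
  (basis G k).ext fun α => by
    rw [basis_apply, sq, Module.End.mul_apply, hS, map_smul, hS, smul_smul, hu, one_smul,
      Module.End.one_apply]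

end SignedPermutation

/-- With `Q = ℤv₁ ⊕ ℤv₂`, `ε` the standard cocycle, `σ` the swap
automorphism and `η` any admissible sign function, the ℂ-linear endomorphism `T = σ̂`
of the group algebra `ℂ[Q]` determined on the canonical basis by
`σ̂(e^α) = η(α)⁻¹ e^{σ(α)}` has order exactly 4: `T⁴ = 1` but `T² ≠ 1`; indeed
`T²(e^α) = (−1)^(m²−n²) e^α` for `α = mv₁ + nv₂`. -/
theorem stmt4 (η : ℤ × ℤ → ℤˣ)
    (hη : ∀ α β : ℤ × ℤ, η α * η β * epsStd α β = η (α + β) * epsStd (swapAut α) (swapAut β))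
    (hfix : ∀ α : ℤ × ℤ, swapAut α = α → η α = 1)
    (T : Module.End ℂ (AddMonoidAlgebra ℂ (ℤ × ℤ)))
    (hT : ∀ α : ℤ × ℤ, T (AddMonoidAlgebra.single α 1) =
      ((((η α)⁻¹ : ℤˣ) : ℤ) : ℂ) • AddMonoidAlgebra.single (swapAut α) 1) :
    T ^ 4 = 1 ∧ T ^ 2 ≠ 1 ∧
      ∀ m n : ℤ, (T ^ 2) (AddMonoidAlgebra.single ((m, n) : ℤ × ℤ) (1 : ℂ)) =
        ((((-1 : ℤˣ) ^ (m ^ 2 - n ^ 2) : ℤˣ) : ℤ) : ℂ) •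
          AddMonoidAlgebra.single ((m, n) : ℤ × ℤ) (1 : ℂ) := by
  have hT2 (α : ℤ × ℤ) : (T ^ 2) (single α 1) =
      ((((-1 : ℤˣ) ^ (α.1 ^ 2 - α.2 ^ 2) : ℤˣ) : ℤ) : ℂ) • single α 1 := by
    rw [sq_apply_single_of_involutive swapAut_involutive hT, Int.units_inv_eq_self,
      Int.units_inv_eq_self, ← Int.cast_mul, ← Units.val_mul,
      mul_apply_swapAut_of_admissible hη hfix]
  refine ⟨?_, fun h => ?_, fun m n => hT2 (m, n)⟩
  · rw [show 4 = 2 * 2 from rfl, pow_mul]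
    exact sq_eq_one_of_apply_single_eq_smul (fun _ => Int.cast_units_mul_self _) hT2
  · have h10 := congrArg (coeff · (1, 0)) (hT2 (1, 0))
    norm_num [h] at h10
end
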